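/- arXiv:1403.5217 — 2 statements merged into one kernel-verified Lean document; each statement's English description precedes it below -/
import Mathlib

section
/- If p₁,…,pₙ are points in ℝ^(2d+1) such that any 2d+2 of them are affinely independent, then for any two sets A, B of at most d+1 indices each with A ∩ B = ∅, the convex hulls of {pᵢ : i ∈ A} and {pⱼ : j ∈ B} are disjoint. Consequently every d-dimensional simplicial complex on n vertices linearly embeds in ℝ^(2d+1). -/
/-- If any `2d+2` of the points `p₁,…,pₙ` in `ℝ^(2d+1)` are affinely independent,
then convex hulls of disjoint index sets of size at most `d+1` are disjoint;
consequently every `d`-dimensional simplicial complex on these vertices linearly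
embeds in `ℝ^(2d+1)`: geometric simplices of any two faces (sets of at most
`d+1` vertices) intersect exactly in the geometric simplex of their common face. -/
theorem generic_points_embed_d_complex
    {n d : ℕ} (p : Fin n → EuclideanSpace ℝ (Fin (2 * d + 1)))
    (hgen : ∀ s : Finset (Fin n), s.card ≤ 2 * d + 2 →
      AffineIndependent ℝ (fun i : s => p i)) :
    (∀ A B : Finset (Fin n), A.card ≤ d + 1 → B.card ≤ d + 1 → Disjoint A B →
        convexHull ℝ (p '' ↑A) ∩ convexHull ℝ (p '' ↑B) = ∅) ∧
    (∀ A B : Finset (Fin n), A.card ≤ d + 1 → B.card ≤ d + 1 →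
        convexHull ℝ (p '' ↑A) ∩ convexHull ℝ (p '' ↑B)
          = convexHull ℝ (p '' ↑(A ∩ B))) := by
  have hinj : Function.Injective p := by
    intro i j hij
    by_contra hne
    have h2 : ({i, j} : Finset (Fin n)).card ≤ 2 * d + 2 := by
      calc ({i, j} : Finset (Fin n)).card ≤ 2 := Finset.card_insert_le _ _ |>.trans (by simp)
      _ ≤ 2 * d + 2 := by omega
    have := (hgen _ h2).injective (a₁ := ⟨i, by simp⟩) (a₂ := ⟨j, by simp⟩) hij
    exact hne (congrArg Subtype.val this)
  classical
  have key : ∀ A B : Finset (Fin n), A.card ≤ d + 1 → B.card ≤ d + 1 →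
      convexHull ℝ (p '' ↑A) ∩ convexHull ℝ (p '' ↑B)
        = convexHull ℝ (p '' ↑(A ∩ B)) := by
    intro A B hA hB
    set t₁ : Finset (EuclideanSpace ℝ (Fin (2 * d + 1))) := A.image p
    set t₂ : Finset (EuclideanSpace ℝ (Fin (2 * d + 1))) := B.image p
    have hcard : (A ∪ B).card ≤ 2 * d + 2 := by
      have := Finset.card_union_le A B
      omega
    have hai : AffineIndependent ℝ ((↑) : ↑(t₁ ∪ t₂) → EuclideanSpace ℝ (Fin (2 * d + 1))) := by
      have h1 := (hgen _ hcard).range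
      have hr : Set.range (fun i : (A ∪ B : Finset (Fin n)) => p i)
          = ↑(t₁ ∪ t₂ : Finset _) := by
        ext x
        simp [t₁, t₂, Set.range, Finset.mem_union, Finset.mem_image]
        constructor
        · rintro ⟨a, ha, rfl⟩
          rcases ha with h | h
          · exact Or.inl ⟨a, h, rfl⟩
          · exact Or.inr ⟨a, h, rfl⟩
        · rintro (⟨a, h, rfl⟩ | ⟨a, h, rfl⟩)
          exacts [⟨a, Or.inl h, rfl⟩, ⟨a, Or.inr h, rfl⟩]
      rwa [hr] at h1
    have := hai.convexHull_inter'
    have himg : (t₁ ∩ t₂ : Finset _) = (A ∩ B).image p := (Finset.image_inter A B hinj).symm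
    rw [← Finset.coe_inter, himg] at this
    simp only [t₁, t₂, Finset.coe_image] at this
    exact this.symm
  refine ⟨fun A B hA hB hAB => ?_, key⟩
  rw [key A B hA hB, Finset.disjoint_iff_inter_eq_empty.mp hAB]
  simp
end

section
/- Let r, d be positive integers and n ≥ (r−1)(2d+1) + 1. Any n points in ℝ^(2d) can be partitioned into r subsets whose convex hulls have a common point (a special case of Tverberg's theorem). -/
/-!
Sarkaria's proof via Bárány's colorful Carathéodory theorem.

Colorful Carathéodory: among all transversals `i ↦ w i (c i)`, take a point `y` of least norm in
the union of their convex hulls. If `y ≠ 0`, the points supporting `y` in its transversal lie on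
the hyperplane `⟪y, ·⟫ = ‖y‖²`, which misses `0`, so they are linearly independent and at most
`dim` of them are needed. Recolouring an unused class by a point with `⟪y, ·⟫ ≤ 0` gives a
transversal whose hull contains `y` and a point beyond that hyperplane, hence a point of smaller
norm.

Tverberg: tensor the lifted points `(p i, 1)` with `r` vectors `v₀, …, v_{r-1}` of `ℝ^(r-1)` whose
only linear relation is `∑ vⱼ = 0`. Each colour class `{vⱼ ⊗ (p i, 1)}ⱼ` has barycentre `0`, and
the ambient dimension is `(r-1)(dim + 1)`, so colorful Carathéodory writes `0` as a convex
combination `∑ λᵢ v_{P i} ⊗ (p i, 1)`. Grouped by colour, this says `∑ⱼ vⱼ ⊗ uⱼ = 0` for the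
partial sums `uⱼ = ∑_{P i = j} λᵢ (p i, 1)`, so all `uⱼ` are equal, and their common
normalization lies in the convex hull of every part.
-/

open Finset Module
open scoped InnerProductSpace

section VectorSpace

variable {V : Type*} [AddCommGroup V] [Module ℝ V]

theorem exists_sum_smul_eq_of_mem_convexHull_range {ι : Type*} [Fintype ι] {z : ι → V} {x : V}
    (hx : x ∈ convexHull ℝ (Set.range z)) :
    ∃ w : ι → ℝ, (∀ i, 0 ≤ w i) ∧ ∑ i, w i = 1 ∧ ∑ i, w i • z i = x := by
  classical
  obtain ⟨s, w, hw₀, hw₁, rfl⟩ := (convexHull_range_eq_exists_affineCombination z).subset hx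
  refine ⟨fun i => if i ∈ s then w i else 0, fun i => ?_, ?_, ?_⟩
  · by_cases hi : i ∈ s <;> simp [hi, hw₀]
  · rw [sum_ite_mem, univ_inter, hw₁]
  · simp only [ite_smul, zero_smul]
    rw [sum_ite_mem, univ_inter, s.affineCombination_eq_linear_combination _ _ hw₁]

theorem exists_apply_nonpos_of_zero_mem_convexHull (f : V →ₗ[ℝ] ℝ) {A : Set V}
    (h : 0 ∈ convexHull ℝ A) : ∃ a ∈ A, f a ≤ 0 := by
  by_contra! hA
  have : (0 : V) ∈ {a | 0 < f a} := convexHull_min hA (convex_halfSpace_gt f.isLinear 0) h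
  simp at this

theorem apply_eq_of_sum_smul_eq_of_forall_le {ι : Type*} [Fintype ι] (f : V →ₗ[ℝ] ℝ)
    {z : ι → V} {μ : ι → ℝ} {y : V} (hμ : ∀ i, 0 < μ i) (hμ₁ : ∑ i, μ i = 1)
    (hy : ∑ i, μ i • z i = y) (hle : ∀ i, f y ≤ f (z i)) (i : ι) : f (z i) = f y := by
  have hsum : ∑ j, μ j * (f (z j) - f y) = 0 := by
    have hfy : ∑ j, μ j * f (z j) = f y := by simp only [← hy, map_sum, map_smul, smul_eq_mul]
    rw [← hfy]
    simp only [mul_sub, sum_sub_distrib, ← sum_mul, hμ₁, one_mul, sub_self]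
  have := (sum_eq_zero_iff_of_nonneg fun j _ => mul_nonneg (hμ j).le (sub_nonneg.2 (hle j))).1
    hsum i (mem_univ i)
  linarith [(mul_eq_zero.1 this).resolve_left (hμ i).ne']

theorem AffineIndependent.linearIndependent_of_forall_apply_eq {k W ι : Type*} [Field k]
    [AddCommGroup W] [Module k W] {p : ι → W} (hp : AffineIndependent k p) (f : W →ₗ[k] k)
    {c : k} (hc : c ≠ 0) (hf : ∀ i, f (p i) = c) : LinearIndependent k p := by
  rw [linearIndependent_iff']
  intro s g hg
  have hsum : ∑ i ∈ s, g i = 0 := by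
    have := congrArg f hg
    simp only [map_sum, map_smul, hf, smul_eq_mul, ← sum_mul, map_zero] at this
    exact (mul_eq_zero.1 this).resolve_right hc
  exact hp.eq_zero_of_sum_eq_zero hsum hg

theorem LinearEquiv.zero_mem_convexHull_range_comp_iff {W : Type*} [AddCommGroup W] [Module ℝ W]
    (e : V ≃ₗ[ℝ] W) {ι : Type*} (g : ι → V) :
    0 ∈ convexHull ℝ (Set.range (e ∘ g)) ↔ 0 ∈ convexHull ℝ (Set.range g) := by
  have := LinearMap.image_convexHull e.toLinearMap (Set.range g)
  rw [LinearEquiv.coe_coe] at this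
  rw [Set.range_comp, ← this]
  simp

end VectorSpace

section InnerProductSpace

variable {E : Type*} [NormedAddCommGroup E] [InnerProductSpace ℝ E]

theorem sq_norm_le_inner_of_isMinOn {K : Set E} (hK : Convex ℝ K) {y z : E} (hy : y ∈ K)
    (hmin : IsMinOn (‖·‖) K y) (hz : z ∈ K) : ‖y‖ ^ 2 ≤ ⟪y, z⟫_ℝ := by
  have h := (norm_eq_iInf_iff_real_inner_le_zero hK hy (u := 0)).1
    (by simpa using (hmin.iInf_eq hy).symm) z hz
  rw [zero_sub, inner_neg_left, inner_sub_right, real_inner_self_eq_norm_sq] at h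
  linarith

theorem exists_card_le_finrank_mem_convexHull_image_of_isMinOn [FiniteDimensional ℝ E]
    {ι : Type*} {T : ι → E} {y : E} (hy : y ∈ convexHull ℝ (Set.range T))
    (hmin : IsMinOn (‖·‖) (convexHull ℝ (Set.range T)) y) (hy₀ : y ≠ 0) :
    ∃ s : Finset ι, #s ≤ finrank ℝ E ∧ y ∈ convexHull ℝ (T '' s) := by
  classical
  obtain ⟨κ, _, z, μ, hzT, hz, hμ, hμ₁, hμz⟩ := eq_pos_convex_span_of_mem_convexHull hy
  have hplane : ∀ k, innerₛₗ ℝ y (z k) = ‖y‖ ^ 2 := by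
    have hle k : innerₛₗ ℝ y y ≤ innerₛₗ ℝ y (z k) := by
      simpa [real_inner_self_eq_norm_sq] using sq_norm_le_inner_of_isMinOn
        (convex_convexHull ℝ _) hy hmin (subset_convexHull ℝ _ (hzT ⟨k, rfl⟩))
    simpa [real_inner_self_eq_norm_sq] using
      apply_eq_of_sum_smul_eq_of_forall_le (innerₛₗ ℝ y) hμ hμ₁ hμz hle
  have hlin : LinearIndependent ℝ z := hz.linearIndependent_of_forall_apply_eq (innerₛₗ ℝ y)
    (pow_ne_zero 2 (norm_ne_zero_iff.2 hy₀)) hplane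
  choose idx hidx using fun k => hzT ⟨k, rfl⟩
  refine ⟨univ.image idx, card_image_le.trans hlin.fintype_card_le_finrank, ?_⟩
  exact mem_convexHull_of_exists_fintype μ z (fun k => (hμ k).le) hμ₁
    (fun k => ⟨idx k, by simp, hidx k⟩) hμz

theorem colorful_caratheodory_of_inner [FiniteDimensional ℝ E] {ι κ : Type*} [Fintype ι]
    [Finite κ] (hι : finrank ℝ E < Fintype.card ι) (w : ι → κ → E)
    (h₀ : ∀ i, (0 : E) ∈ convexHull ℝ (Set.range (w i))) :
    ∃ c : ι → κ, (0 : E) ∈ convexHull ℝ (Set.range fun i => w i (c i)) := by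
  classical
  set K : (ι → κ) → Set E := fun c => convexHull ℝ (Set.range fun i => w i (c i))
  obtain ⟨i⟩ : Nonempty ι := Fintype.card_pos_iff.1 (by omega)
  have : Nonempty κ := Set.range_nonempty_iff_nonempty.1 (convexHull_nonempty_iff.1 ⟨0, h₀ i⟩)
  have hcompact : IsCompact (⋃ c, K c) :=
    isCompact_iUnion fun c => (Set.finite_range _).isCompact_convexHull ℝ
  obtain ⟨y, hyK, hmin⟩ := hcompact.exists_isMinOn
    ⟨_, Set.mem_iUnion.2 ⟨fun _ => Classical.arbitrary κ, subset_convexHull ℝ _ ⟨i, rfl⟩⟩⟩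
    continuous_norm.continuousOn
  have hminK c : IsMinOn (‖·‖) (K c) y := hmin.on_subset (Set.subset_iUnion K c)
  obtain ⟨c₀, hy⟩ := Set.mem_iUnion.1 hyK
  by_contra! hK
  have hy₀ : y ≠ 0 := by rintro rfl; exact hK c₀ hy
  obtain ⟨s, hs, hys⟩ := exists_card_le_finrank_mem_convexHull_image_of_isMinOn hy (hminK c₀) hy₀
  obtain ⟨i₀, -, hi₀⟩ := exists_mem_notMem_of_card_lt_card (s := s) (t := univ)
    (by rw [card_univ]; omega)
  obtain ⟨_, ⟨j₀, rfl⟩, hj₀⟩ := exists_apply_nonpos_of_zero_mem_convexHull (innerₛₗ ℝ y) (h₀ i₀)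
  set c₁ := Function.update c₀ i₀ j₀
  have hy₁ : y ∈ K c₁ := by
    refine convexHull_mono ?_ hys
    rintro _ ⟨i, hi, rfl⟩
    exact ⟨i, by simp [c₁, Function.update_of_ne (ne_of_mem_of_not_mem hi hi₀)]⟩
  have hw₁ : w i₀ j₀ ∈ K c₁ := subset_convexHull ℝ _ ⟨i₀, by simp [c₁]⟩
  have := sq_norm_le_inner_of_isMinOn (convex_convexHull ℝ _) hy₁ (hminK c₁) hw₁
  have hj₀' : ⟪y, w i₀ j₀⟫_ℝ ≤ 0 := hj₀
  exact hy₀ (norm_eq_zero.1 (by nlinarith [norm_nonneg y]))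

end InnerProductSpace

theorem colorful_caratheodory {V : Type*} [AddCommGroup V] [Module ℝ V] [FiniteDimensional ℝ V]
    {ι κ : Type*} [Fintype ι] [Finite κ] (hι : finrank ℝ V < Fintype.card ι) (w : ι → κ → V)
    (h₀ : ∀ i, (0 : V) ∈ convexHull ℝ (Set.range (w i))) :
    ∃ c : ι → κ, (0 : V) ∈ convexHull ℝ (Set.range fun i => w i (c i)) := by
  let e := LinearEquiv.ofFinrankEq V (EuclideanSpace ℝ (Fin (finrank ℝ V)))
    finrank_euclideanSpace_fin.symm
  obtain ⟨c, hc⟩ := colorful_caratheodory_of_inner (by simpa using hι) (fun i j => e (w i j))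
    fun i => (e.zero_mem_convexHull_range_comp_iff (w i)).2 (h₀ i)
  exact ⟨c, (e.zero_mem_convexHull_range_comp_iff _).1 hc⟩

section Sarkaria

variable {k : ℕ} {M : Type*} [AddCommGroup M] [Module ℝ M]

/-- `v_j = e_j` for `j < k` and `v_k = -(1, …, 1)`. -/
def sarkariaVector (k : ℕ) (j : Fin (k + 1)) : Fin k → ℝ :=
  fun a => (if j = a.castSucc then 1 else 0) - (if j = Fin.last k then 1 else 0)

theorem sum_sarkariaVector_smul (u : Fin (k + 1) → M) (a : Fin k) :
    ∑ j, sarkariaVector k j a • u j = u a.castSucc - u (Fin.last k) := by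
  simp [sarkariaVector, sub_smul, ite_smul, sum_sub_distrib]

/-- The tensor `v_j ⊗ x`, with `ℝ^k ⊗ M` modelled as `Fin k → M`. -/
def sarkariaLift (j : Fin (k + 1)) (x : M) : Fin k → M :=
  fun a => sarkariaVector k j a • x

theorem zero_mem_convexHull_range_sarkariaLift (x : M) :
    0 ∈ convexHull ℝ (Set.range fun j : Fin (k + 1) => sarkariaLift j x) := by
  refine mem_convexHull_of_exists_fintype (fun _ => ((k : ℝ) + 1)⁻¹) _ (fun _ => by positivity)
    ?_ (fun j => ⟨j, rfl⟩) ?_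
  · simp only [sum_const, card_univ, Fintype.card_fin, nsmul_eq_mul]
    push_cast
    field_simp
  · ext a
    simp [sarkariaLift, ← smul_sum, sum_sarkariaVector_smul (fun _ => x) a]

theorem sum_fiber_eq_of_sum_sarkariaLift_eq_zero {ι : Type*} [Fintype ι] (c : ι → Fin (k + 1))
    (μ : ι → ℝ) (q : ι → M) (h : ∑ i, μ i • sarkariaLift (c i) (q i) = 0) (j : Fin (k + 1)) :
    ∑ i with c i = j, μ i • q i = ∑ i with c i = Fin.last k, μ i • q i := by
  classical
  induction j using Fin.lastCases with
  | last => rfl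
  | cast a =>
    have ha := congrFun h a
    rw [Finset.sum_apply, Pi.zero_apply] at ha
    rw [← sub_eq_zero, ← sum_sarkariaVector_smul (fun j => ∑ i with c i = j, μ i • q i), ← ha,
      ← sum_fiberwise univ c]
    refine sum_congr rfl fun j _ => ?_
    rw [smul_sum]
    refine sum_congr rfl fun i hi => ?_
    rw [(mem_filter.1 hi).2, Pi.smul_apply, sarkariaLift, smul_comm]

theorem exists_mem_convexHull_fibers_of_sum_sarkariaLift_eq_zero {ι : Type*} [Fintype ι]
    {p : ι → M} (c : ι → Fin (k + 1)) {μ : ι → ℝ} (hμ : ∀ i, 0 ≤ μ i) (hμ₁ : ∑ i, μ i = 1)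
    (h : ∑ i, μ i • sarkariaLift (c i) (p i, (1 : ℝ)) = 0) :
    ∃ x : M, ∀ j, x ∈ convexHull ℝ (p '' {i | c i = j}) := by
  classical
  set u : Fin (k + 1) → M × ℝ := fun j => ∑ i with c i = j, μ i • (p i, (1 : ℝ))
  have hu : ∀ j, u j = u (Fin.last k) := sum_fiber_eq_of_sum_sarkariaLift_eq_zero c μ _ h
  have hsnd j : (u j).2 = ∑ i with c i = j, μ i := by simp [u, Prod.snd_sum]
  have htotal : ((k : ℝ) + 1) * (u (Fin.last k)).2 = 1 := by
    calc ((k : ℝ) + 1) * (u (Fin.last k)).2 = ∑ j, (u j).2 := by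
          rw [sum_congr rfl fun j _ => by rw [hu j], sum_const, card_univ, Fintype.card_fin,
            nsmul_eq_mul, Nat.cast_succ]
      _ = 1 := by simp only [hsnd, sum_fiberwise univ c μ, hμ₁]
  have hweight j : 0 < ∑ i with c i = j, μ i := by
    rw [← hsnd, hu j]
    nlinarith
  refine ⟨(u (Fin.last k)).2⁻¹ • (u (Fin.last k)).1, fun j => ?_⟩
  have hx : (u (Fin.last k)).2⁻¹ • (u (Fin.last k)).1 =
      ({i | c i = j} : Finset ι).centerMass μ p := by
    rw [← hu j]
    simp [u, Finset.centerMass, Prod.fst_sum, Prod.snd_sum]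
  rw [hx]
  exact centerMass_mem_convexHull _ (fun i _ => hμ i) (hweight j)
    fun i hi => ⟨i, (mem_filter.1 hi).2, rfl⟩

end Sarkaria

theorem tverberg {F : Type*} [AddCommGroup F] [Module ℝ F] [FiniteDimensional ℝ F] {ι : Type*}
    [Fintype ι] {r : ℕ} (hr : 0 < r) (hι : (r - 1) * (finrank ℝ F + 1) < Fintype.card ι)
    (p : ι → F) : ∃ P : ι → Fin r, ∃ x : F, ∀ j, x ∈ convexHull ℝ (p '' {i | P i = j}) := by
  obtain ⟨k, rfl⟩ : ∃ k, r = k + 1 := ⟨r - 1, by omega⟩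
  have hdim : finrank ℝ (Fin k → F × ℝ) < Fintype.card ι := by
    simpa [Module.finrank_pi_fintype, Module.finrank_prod] using hι
  obtain ⟨c, hc⟩ := colorful_caratheodory hdim (fun i j => sarkariaLift j (p i, (1 : ℝ)))
    fun i => zero_mem_convexHull_range_sarkariaLift _
  obtain ⟨μ, hμ, hμ₁, hμc⟩ := exists_sum_smul_eq_of_mem_convexHull_range hc
  exact ⟨c, exists_mem_convexHull_fibers_of_sum_sarkariaLift_eq_zero c hμ hμ₁ hμc⟩

theorem tverberg_R2d_general
    {r d n : ℕ} (hr : 0 < r)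
    (hn : (r - 1) * (2 * d + 1) + 1 ≤ n)
    (p : Fin n → EuclideanSpace ℝ (Fin (2 * d))) :
    ∃ P : Fin n → Fin r, ∃ x : EuclideanSpace ℝ (Fin (2 * d)),
      ∀ j : Fin r, x ∈ convexHull ℝ (p '' {i | P i = j}) :=
  tverberg hr (by rw [finrank_euclideanSpace_fin, Fintype.card_fin]; omega) p

/-- Tverberg's theorem in `ℝ^(2d)`: any `n ≥ (r−1)(2d+1) + 1` points can be
partitioned into `r` subsets whose convex hulls have a common point. -/
theorem tverberg_R2d
    {r d n : ℕ} (hr : 0 < r) (hd : 0 < d)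
    (hn : (r - 1) * (2 * d + 1) + 1 ≤ n)
    (p : Fin n → EuclideanSpace ℝ (Fin (2 * d))) :
    ∃ P : Fin n → Fin r, ∃ x : EuclideanSpace ℝ (Fin (2 * d)),
      ∀ j : Fin r, x ∈ convexHull ℝ (p '' {i | P i = j}) :=
  tverberg_R2d_general hr hn p
end
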